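/- arXiv:1712.01540 — 2 statements merged into one kernel-verified Lean document; each statement's English description precedes it below -/
import Mathlib

section
/- Let X be a Banach space, S a closed subset of X, x₀ ∈ S, and let D be a uniform tangent set to S at x₀. Then every element of D is a tangent vector to S at x₀ in Rockafellar's sense; i.e., D is contained in the Clarke tangent cone to S at x₀. -/
open Filter Topology

/-!
Fix `v ∈ D` and `ε > 0`, and let `δ` be the radius of uniform tangency for `ε / 2`. Starting
from `x ∈ S` near `x₀`, consider the pairs `(s, y)` with `y ∈ S` and `‖y - x - s • v‖ ≤ (ε / 2) s`,
ordered by `(s, y) ≤ (s', y')` iff `s ≤ s'` and `‖y' - y‖ ≤ K (s' - s)`, with `K = ‖v‖ + ε / 2`.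
Chains have upper bounds because the order makes `y` a `K`-Lipschitz function of `s` along a
chain and `X` is complete, so Zorn's lemma gives a maximal pair. While `(s, y)` stays near `x₀`,
tangency at `y` lets it be pushed further, so a maximal pair has `s = t`; it lies in
`x + t • (v + ε • closedBall)`.
-/

theorem CauchySeq.of_dist_le_mul {α β : Type*} [PseudoMetricSpace α] [PseudoMetricSpace β]
    {f : ℕ → α} {g : ℕ → β} {K : ℝ} (hf : CauchySeq f)
    (hfg : ∀ m n, dist (g m) (g n) ≤ K * dist (f m) (f n)) : CauchySeq g := by
  obtain ⟨b, -, hb, hlim⟩ := cauchySeq_iff_le_tendsto_0.1 hf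
  refine cauchySeq_of_le_tendsto_0 (fun N => |K| * b N) (fun m n N hm hn => ?_)
    (by simpa using hlim.const_mul |K|)
  calc dist (g m) (g n) ≤ K * dist (f m) (f n) := hfg m n
    _ ≤ |K| * dist (f m) (f n) := mul_le_mul_of_nonneg_right (le_abs_self K) dist_nonneg
    _ ≤ |K| * b N := mul_le_mul_of_nonneg_left (hb m n N hm hn) (abs_nonneg K)

section ConeLE

variable {X : Type*} [NormedAddCommGroup X]

def ConeLE (K : ℝ) (p q : ℝ × X) : Prop :=
  p.1 ≤ q.1 ∧ ‖q.2 - p.2‖ ≤ K * (q.1 - p.1)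

theorem ConeLE.refl (K : ℝ) (p : ℝ × X) : ConeLE K p p :=
  ⟨le_rfl, by simp⟩

theorem ConeLE.trans {K : ℝ} {p q r : ℝ × X} (hpq : ConeLE K p q) (hqr : ConeLE K q r) :
    ConeLE K p r :=
  ⟨hpq.1.trans hqr.1, calc
    ‖r.2 - p.2‖ ≤ ‖r.2 - q.2‖ + ‖q.2 - p.2‖ := norm_sub_le_norm_sub_add_norm_sub _ _ _
    _ ≤ K * (r.1 - q.1) + K * (q.1 - p.1) := add_le_add hqr.2 hpq.2
    _ = K * (r.1 - p.1) := by ring⟩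

theorem ConeLE.norm_sub_le {K : ℝ} {p q : ℝ × X} (h : ConeLE K p q ∨ ConeLE K q p) :
    ‖p.2 - q.2‖ ≤ K * |p.1 - q.1| := by
  rcases h with ⟨hle, hpq⟩ | ⟨hle, hqp⟩
  · rwa [norm_sub_rev, abs_sub_comm, abs_of_nonneg (sub_nonneg.2 hle)]
  · rwa [abs_of_nonneg (sub_nonneg.2 hle)]

theorem exists_coneLE_upperBound [CompleteSpace X] {K : ℝ} {M : Set (ℝ × X)} (hM : IsClosed M)
    (hbdd : BddAbove (Prod.fst '' M)) {c : Set M}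
    (hc : IsChain (fun p q : M => ConeLE K (p : ℝ × X) q) c) (hne : c.Nonempty) :
    ∃ ub : M, ∀ p ∈ c, ConeLE K (p : ℝ × X) ub := by
  set L := sSup ((fun p : M => (p : ℝ × X).1) '' c)
  have hbddc : BddAbove ((fun p : M => (p : ℝ × X).1) '' c) :=
    hbdd.mono (by rintro _ ⟨p, -, rfl⟩; exact ⟨p, p.2, rfl⟩)
  have hle : ∀ p ∈ c, (p : ℝ × X).1 ≤ L := fun p hp => le_csSup hbddc ⟨p, hp, rfl⟩
  have hlip : ∀ p ∈ c, ∀ q ∈ c,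
      ‖(p : ℝ × X).2 - (q : ℝ × X).2‖ ≤ K * |(p : ℝ × X).1 - (q : ℝ × X).1| := by
    intro p hp q hq
    rcases eq_or_ne p q with rfl | hpq
    · exact ConeLE.norm_sub_le (.inl (ConeLE.refl K _))
    · exact ConeLE.norm_sub_le (hc hp hq hpq)
  obtain ⟨s, -, hs, hsc⟩ := exists_seq_tendsto_sSup (hne.image _) hbddc
  choose u huc hus using hsc
  have hfst : Tendsto (fun n => (u n : ℝ × X).1) atTop (𝓝 L) := by simpa only [hus] using hs
  have hcauchy : CauchySeq fun n => (u n : ℝ × X).2 :=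
    hfst.cauchySeq.of_dist_le_mul fun m n => by
      simpa only [dist_eq_norm, Real.norm_eq_abs] using hlip _ (huc m) _ (huc n)
  obtain ⟨y, hy⟩ := cauchySeq_tendsto_of_complete hcauchy
  have hLy : (L, y) ∈ M :=
    hM.mem_of_tendsto (hfst.prodMk_nhds hy) (Eventually.of_forall fun n => (u n).2)
  refine ⟨⟨(L, y), hLy⟩, fun q hq => ⟨hle q hq, ?_⟩⟩
  have hdist := le_of_tendsto_of_tendsto' (hy.sub_const _).norm
    ((hfst.sub_const _).abs.const_mul K) fun n => hlip _ (huc n) q hq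
  rwa [abs_of_nonneg (sub_nonneg.2 (hle q hq))] at hdist

end ConeLE

section Reachability

variable {X : Type*} [NormedAddCommGroup X] [NormedSpace ℝ X]

theorem norm_smul_le_of_norm_le_one {r : ℝ} (hr : 0 ≤ r) {b : X} (hb : ‖b‖ ≤ 1) :
    ‖r • b‖ ≤ r := by
  rw [norm_smul, Real.norm_of_nonneg hr]
  exact mul_le_of_le_one_right hr hb

theorem norm_smul_add_smul_le {v b : X} {r h : ℝ} (hr : 0 ≤ r) (hh : 0 ≤ h) (hb : ‖b‖ ≤ 1) :
    ‖h • (v + r • b)‖ ≤ (‖v‖ + r) * h := by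
  rw [norm_smul, Real.norm_of_nonneg hh, mul_comm]
  gcongr
  exact (norm_add_le _ _).trans (add_le_add_right (norm_smul_le_of_norm_le_one hr hb) _)

theorem norm_add_smul_sub_le {x y v b : X} {r s h : ℝ} (hr : 0 ≤ r) (hh : 0 ≤ h)
    (hb : ‖b‖ ≤ 1) (hy : ‖y - x - s • v‖ ≤ r * s) :
    ‖y + h • (v + r • b) - x - (s + h) • v‖ ≤ r * (s + h) := by
  have hsplit : y + h • (v + r • b) - x - (s + h) • v = (y - x - s • v) + (h * r) • b := by
    rw [smul_add, smul_smul, add_smul]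
    abel
  calc ‖y + h • (v + r • b) - x - (s + h) • v‖ ≤ ‖y - x - s • v‖ + ‖(h * r) • b‖ := by
        rw [hsplit]; exact norm_add_le _ _
    _ ≤ r * s + h * r := add_le_add hy (norm_smul_le_of_norm_le_one (by positivity) hb)
    _ = r * (s + h) := by ring

theorem norm_sub_le_of_norm_sub_smul_le {x y v : X} (x₀ : X) {r s : ℝ} (hs : 0 ≤ s)
    (hy : ‖y - x - s • v‖ ≤ r * s) : ‖y - x₀‖ ≤ (‖v‖ + r) * s + ‖x - x₀‖ := calc
  ‖y - x₀‖ = ‖(y - x - s • v) + s • v + (x - x₀)‖ := by congr 1; abel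
  _ ≤ r * s + s * ‖v‖ + ‖x - x₀‖ := by
    refine norm_add₃_le.trans (add_le_add_three hy ?_ le_rfl)
    rw [norm_smul, Real.norm_of_nonneg hs]
  _ = (‖v‖ + r) * s + ‖x - x₀‖ := by ring

theorem exists_norm_le_one_add_smul_eq {x y v : X} {ε t : ℝ} (hε : 0 < ε) (ht : 0 ≤ t)
    (hy : ‖y - x - t • v‖ ≤ ε * t) : ∃ b : X, ‖b‖ ≤ 1 ∧ x + t • (v + ε • b) = y := by
  rcases ht.eq_or_lt with rfl | ht
  · refine ⟨0, by simp, ?_⟩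
    simpa [sub_eq_zero, eq_comm] using hy
  · have htε : 0 < t * ε := mul_pos ht hε
    refine ⟨(t * ε)⁻¹ • (y - x - t • v), ?_, ?_⟩
    · rw [norm_smul, Real.norm_of_nonneg (inv_nonneg.2 htε.le), inv_mul_le_iff₀ htε]
      linarith
    · rw [smul_add, smul_smul, smul_smul, mul_inv_cancel₀ htε.ne', one_smul]
      abel

theorem exists_mem_norm_sub_smul_le [CompleteSpace X] {S : Set X} (hS : IsClosed S) {x v : X}
    (hx : x ∈ S) {r T : ℝ} (hr : 0 ≤ r) (hT : 0 ≤ T)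
    (hstep : ∀ s ∈ Set.Ico 0 T, ∀ y ∈ S, ‖y - x - s • v‖ ≤ r * s →
      ∃ h ∈ Set.Ioc 0 (T - s), ∃ b : X, ‖b‖ ≤ 1 ∧ y + h • (v + r • b) ∈ S) :
    ∃ y ∈ S, ‖y - x - T • v‖ ≤ r * T := by
  set M : Set (ℝ × X) := {p | p.1 ∈ Set.Icc 0 T ∧ p.2 ∈ S ∧ ‖p.2 - x - p.1 • v‖ ≤ r * p.1}
  have hM : IsClosed M := (isClosed_Icc.preimage continuous_fst).inter
    ((hS.preimage continuous_snd).inter (isClosed_le (f := fun p : ℝ × X => ‖p.2 - x - p.1 • v‖)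
      (g := fun p => r * p.1) (by fun_prop) (by fun_prop)))
  have hbdd : BddAbove (Prod.fst '' M) := ⟨T, by rintro _ ⟨p, hp, rfl⟩; exact hp.1.2⟩
  have h0 : ((0 : ℝ), x) ∈ M := ⟨⟨le_rfl, hT⟩, hx, by simp⟩
  obtain ⟨⟨⟨s, y⟩, ⟨hs0, hsT⟩, hyS, hy⟩, hmax⟩ :=
    exists_maximal_of_chains_bounded (r := fun p q : M => ConeLE (‖v‖ + r) (p : ℝ × X) q)
      (fun c hc => c.eq_empty_or_nonempty.elim (fun hc => ⟨⟨_, h0⟩, by simp [hc]⟩)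
        (exists_coneLE_upperBound hM hbdd hc))
      (fun hpq hqr => hpq.trans hqr)
  rcases hsT.lt_or_eq with hsT | rfl
  · obtain ⟨h, ⟨hh0, hhT⟩, b, hb, hbS⟩ := hstep s ⟨hs0, hsT⟩ y hyS hy
    have hnext : (s + h, y + h • (v + r • b)) ∈ M :=
      ⟨⟨by linarith, by linarith⟩, hbS, norm_add_smul_sub_le hr hh0.le hb hy⟩
    have hcone : ConeLE (‖v‖ + r) (s, y) (s + h, y + h • (v + r • b)) := by
      refine ⟨by linarith, ?_⟩
      simpa using norm_smul_add_smul_le hr hh0.le hb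
    have := (hmax (a := ⟨_, hnext⟩) hcone).1
    dsimp only at this
    linarith
  · exact ⟨y, hyS, hy⟩

end Reachability

theorem uts_subset_clarkeTangentCone_general
    {X : Type*} [NormedAddCommGroup X] [NormedSpace ℝ X] [CompleteSpace X]
    (S : Set X) (hS : IsClosed S) (x₀ : X)
    (D : Set X)
    (h : ∀ ε > (0:ℝ), ∃ δ > (0:ℝ), ∀ v ∈ D, ∀ x ∈ S, ‖x - x₀‖ ≤ δ →
      ∃ lam > (0:ℝ), ∀ t ∈ Set.Icc (0:ℝ) lam,
        ∃ b : X, ‖b‖ ≤ 1 ∧ x + t • (v + ε • b) ∈ S) :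
    D ⊆ {v : X | ∀ ε > (0:ℝ), ∃ δ > (0:ℝ), ∃ lam > (0:ℝ), ∀ x ∈ S, ‖x - x₀‖ ≤ δ →
      ∀ t ∈ Set.Icc (0:ℝ) lam, ∃ b : X, ‖b‖ ≤ 1 ∧ x + t • (v + ε • b) ∈ S} := by
  intro v hv ε hε
  obtain ⟨δ, hδ, htan⟩ := h (ε / 2) (half_pos hε)
  have hK : 0 < ‖v‖ + ε / 2 := by positivity
  refine ⟨δ / 2, half_pos hδ, δ / 2 / (‖v‖ + ε / 2), by positivity,
    fun x hx hxδ t ⟨ht0, htlam⟩ => ?_⟩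
  have htK : t * (‖v‖ + ε / 2) ≤ δ / 2 := (le_div_iff₀ hK).1 htlam
  obtain ⟨y, hyS, hy⟩ : ∃ y ∈ S, ‖y - x - t • v‖ ≤ ε / 2 * t := by
    refine exists_mem_norm_sub_smul_le hS hx (half_pos hε).le ht0 fun s ⟨hs0, hst⟩ y hyS hy => ?_
    have hyδ : ‖y - x₀‖ ≤ δ := (norm_sub_le_of_norm_sub_smul_le x₀ hs0 hy).trans (by nlinarith)
    obtain ⟨lam, hlam, hpush⟩ := htan v hv y hyS hyδ
    have hstep : 0 < min (t - s) lam := lt_min (sub_pos.2 hst) hlam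
    obtain ⟨b, hb, hbS⟩ := hpush _ ⟨hstep.le, min_le_right _ _⟩
    exact ⟨_, ⟨hstep, min_le_left _ _⟩, b, hb, hbS⟩
  obtain ⟨b, hb, rfl⟩ := exists_norm_le_one_add_smul_eq hε ht0 (hy.trans (by nlinarith))
  exact ⟨b, hb, hyS⟩

/-- A uniform tangent set is contained in the Clarke tangent cone. -/
theorem uts_subset_clarkeTangentCone
    {X : Type*} [NormedAddCommGroup X] [NormedSpace ℝ X] [CompleteSpace X]
    (S : Set X) (hS : IsClosed S) (x₀ : X) (hx₀ : x₀ ∈ S)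
    (D : Set X) (hD : Bornology.IsBounded D)
    (h : ∀ ε > (0:ℝ), ∃ δ > (0:ℝ), ∀ v ∈ D, ∀ x ∈ S, ‖x - x₀‖ ≤ δ →
      ∃ lam > (0:ℝ), ∀ t ∈ Set.Icc (0:ℝ) lam,
        ∃ b : X, ‖b‖ ≤ 1 ∧ x + t • (v + ε • b) ∈ S) :
    D ⊆ {v : X | ∀ ε > (0:ℝ), ∃ δ > (0:ℝ), ∃ lam > (0:ℝ), ∀ x ∈ S, ‖x - x₀‖ ≤ δ →
      ∀ t ∈ Set.Icc (0:ℝ) lam, ∃ b : X, ‖b‖ ≤ 1 ∧ x + t • (v + ε • b) ∈ S} :=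
  uts_subset_clarkeTangentCone_general S hS x₀ D h
end

section
/- Let X be a Banach space, φ : X → ℝ ∪ {+∞} lower semicontinuous with φ(x₀) < +∞, and ψ : X → ℝ continuous on X and strictly Fréchet differentiable at x₀ with ψ(x₀) = 0 and ψ'(x₀) = 0. Then a set D ⊆ X × ℝ is a uniform tangent set to epi φ at (x₀, φ(x₀)) if and only if D is a uniform tangent set to epi(φ + ψ) at (x₀, φ(x₀)). -/
open Metric

/-- `D` is a uniform tangent set to `E` at `e₀` (with the ambient norm). -/
def IsUniformTangentSet {Y : Type*} [NormedAddCommGroup Y] [NormedSpace ℝ Y]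
    (E : Set Y) (e₀ : Y) (D : Set Y) : Prop :=
  Bornology.IsBounded D ∧
    ∀ ε > (0:ℝ), ∃ δ > (0:ℝ), ∀ d ∈ D, ∀ e ∈ E, ‖e - e₀‖ ≤ δ →
      ∃ lam > (0:ℝ), ∀ t ∈ Set.Icc (0:ℝ) lam,
        ∃ b : Y, ‖b‖ ≤ 1 ∧ e + t • (d + ε • b) ∈ E

/-!
The shear `(x, p) ↦ (x, p - ψ x)` maps `epi (φ + ψ)` bijectively onto `epi φ`, with inverse the
shear by `+ψ`, and fixes `(x₀, r)`. Since `ψ'(x₀) = 0`, for every `η > 0` the function `ψ` is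
`η`-Lipschitz near `x₀`. So near `(x₀, r)` a shear moves points by at most their distance to
`(x₀, r)`, and along a step `t v` it changes the vertical coordinate by at most `η t ‖v‖`,
uniformly in the base point; with `η` small this turns a direction `d + (ε/2) b` for one set
into a direction `d + ε b'` for the other.
-/

lemma hasStrictFDerivAt_zero_of_forall_abs_sub_le {E : Type*} [SeminormedAddCommGroup E]
    [NormedSpace ℝ E] {f : E → ℝ} {x₀ : E}
    (h : ∀ ε > (0:ℝ), ∃ δ > (0:ℝ), ∀ x y : E, ‖x - x₀‖ < δ → ‖y - x₀‖ < δ →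
      |f y - f x| ≤ ε * ‖y - x‖) :
    HasStrictFDerivAt f (0 : E →L[ℝ] ℝ) x₀ := by
  rw [hasStrictFDerivAt_iff_isLittleO, Asymptotics.isLittleO_iff]
  intro ε hε
  obtain ⟨δ, hδ, h⟩ := h ε hε
  filter_upwards [ball_mem_nhds (x₀, x₀) hδ] with p hp
  rw [mem_ball, Prod.dist_eq, max_lt_iff, dist_eq_norm, dist_eq_norm] at hp
  simpa [Real.norm_eq_abs] using h p.2 p.1 hp.2 hp.1

lemma HasStrictFDerivAt.exists_ball_abs_sub_le {E : Type*} [NormedAddCommGroup E]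
    [NormedSpace ℝ E] {f : E → ℝ} {x₀ : E} (hf : HasStrictFDerivAt f (0 : E →L[ℝ] ℝ) x₀)
    {η : ℝ} (hη : 0 < η) :
    ∃ ρ > 0, ∀ x ∈ ball x₀ ρ, ∀ y ∈ ball x₀ ρ, |f y - f x| ≤ η * ‖y - x‖ := by
  obtain ⟨s, hs, hlip⟩ := hf.exists_lipschitzOnWith_of_nnnorm_lt (K := ⟨η, hη.le⟩)
    (by rw [nnnorm_zero]; exact NNReal.coe_pos.1 hη)
  obtain ⟨ρ, hρ, hρs⟩ := Metric.mem_nhds_iff.1 hs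
  refine ⟨ρ, hρ, fun x hx y hy => ?_⟩
  have := hlip.dist_le_mul y (hρs hy) x (hρs hx)
  rwa [dist_eq_norm, dist_eq_norm, Real.norm_eq_abs] at this

lemma norm_smul_add_smul_le_s6 {E : Type*} [SeminormedAddCommGroup E] [NormedSpace ℝ E]
    {d b : E} {t c M : ℝ} (ht : 0 ≤ t) (hc : 0 ≤ c) (hd : ‖d‖ ≤ M) (hb : ‖b‖ ≤ 1) :
    ‖t • (d + c • b)‖ ≤ t * (M + c) := by
  rw [norm_smul, Real.norm_of_nonneg ht]
  gcongr
  refine (norm_add_le _ _).trans (add_le_add hd ?_)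
  rw [norm_smul, Real.norm_of_nonneg hc]
  simpa using mul_le_mul_of_nonneg_left hb hc

def shear {X : Type*} (ψ : X → ℝ) (p : X × ℝ) : X × ℝ := (p.1, p.2 + ψ p.1)

lemma shear_comp_shear_neg {X : Type*} (ψ : X → ℝ) : shear ψ ∘ shear (-ψ) = id := by
  funext p
  simp [shear]

lemma norm_shear_sub_le {X : Type*} [SeminormedAddCommGroup X] (ψ : X → ℝ) (p q : X × ℝ) :
    ‖shear ψ p - q‖ ≤ ‖p - q‖ + |ψ p.1| := by
  have : shear ψ p - q = (p - q) + (0, ψ p.1) := by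
    ext <;> simp [shear, sub_add_eq_add_sub]
  rw [this]
  exact (norm_add_le _ _).trans_eq (by simp)

lemma exists_shear_add_smul_eq {X : Type*} [SeminormedAddCommGroup X] [NormedSpace ℝ X]
    (ψ : X → ℝ) (e d b : X × ℝ) {t ε : ℝ} (ht : 0 < t)
    (hε : 0 < ε) (hb : ‖b‖ ≤ 1)
    (hψ : |ψ (e + t • (d + (ε / 2) • b)).1 - ψ e.1| ≤ ε / 2 * t) :
    ∃ b' : X × ℝ, ‖b'‖ ≤ 1 ∧
      shear ψ (e + t • (d + ε • b')) = shear ψ e + t • (d + (ε / 2) • b) := by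
  set x' := (e + t • (d + (ε / 2) • b)).1
  set c := (ψ e.1 - ψ x') / (t * ε)
  have hc : |c| ≤ 1 / 2 := by
    rw [abs_div, abs_of_pos (mul_pos ht hε), div_le_iff₀ (mul_pos ht hε), abs_sub_comm]
    linarith
  -- halve `b` and let the vertical part of `b'` absorb the change of `ψ` along the step
  set b' : X × ℝ := (2⁻¹ : ℝ) • b + (0, c)
  have hfst : (e + t • (d + ε • b')).1 = x' := by
    simp [b', x', smul_smul, div_eq_mul_inv]
  refine ⟨b', ?_, Prod.ext hfst ?_⟩
  · calc ‖b'‖ ≤ 2⁻¹ * ‖b‖ + |c| := (norm_add_le _ _).trans_eq (by simp [norm_smul])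
      _ ≤ 1 := by linarith
  · have hc' : t * (ε * c) = ψ e.1 - ψ x' := by
      simp only [c]; field_simp
    simp only [shear, hfst]
    simp only [Prod.fst_add, smul_add, Prod.smul_fst, Prod.smul_mk, smul_zero, smul_eq_mul,
      Prod.snd_add, Prod.smul_snd, x', b'] at hc' ⊢
    linear_combination hc'

lemma IsUniformTangentSet.preimage_shear {X : Type*} [NormedAddCommGroup X] [NormedSpace ℝ X]
    {E D : Set (X × ℝ)} {x₀ : X} {r : ℝ} {ψ : X → ℝ}
    (hE : IsUniformTangentSet E (x₀, r) D) (hψ : HasStrictFDerivAt ψ (0 : X →L[ℝ] ℝ) x₀)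
    (hψ0 : ψ x₀ = 0) :
    IsUniformTangentSet (shear ψ ⁻¹' E) (x₀, r) D := by
  obtain ⟨hD, hE⟩ := hE
  obtain ⟨M, hM, hdM⟩ := hD.exists_pos_norm_le
  refine ⟨hD, fun ε hε => ?_⟩
  set η := ε / (2 * (M + ε))
  have hη : 0 < η := by positivity
  have hηM : η * (M + ε) = ε / 2 := by simp only [η]; field_simp
  have hη1 : η ≤ 1 := by nlinarith
  obtain ⟨ρ, hρ, hψη⟩ := hψ.exists_ball_abs_sub_le hη
  obtain ⟨δ, hδ, hEδ⟩ := hE (ε / 2) (half_pos hε)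
  refine ⟨min (δ / 2) (ρ / 2), by positivity, fun d hd e he hed => ?_⟩
  have hex : ‖e.1 - x₀‖ ≤ min (δ / 2) (ρ / 2) := (norm_fst_le (e - (x₀, r))).trans hed
  have he_ball : e.1 ∈ ball x₀ ρ := by
    rw [mem_ball, dist_eq_norm]; linarith [min_le_right (δ / 2) (ρ / 2)]
  have hshear : ‖shear ψ e - (x₀, r)‖ ≤ δ := by
    have := hψη x₀ (mem_ball_self hρ) e.1 he_ball
    rw [hψ0, sub_zero] at this
    nlinarith [norm_shear_sub_le ψ e (x₀, r), min_le_left (δ / 2) (ρ / 2), norm_nonneg (e.1 - x₀)]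
  obtain ⟨lam, hlam, hl⟩ := hEδ d hd (shear ψ e) he hshear
  refine ⟨min lam (ρ / (3 * (M + ε))), by positivity, fun t ⟨ht0, htlam⟩ => ?_⟩
  rcases ht0.eq_or_lt with rfl | ht
  · exact ⟨0, by simp, by simpa using he⟩
  obtain ⟨b, hb, hmem⟩ := hl t ⟨ht0, htlam.trans (min_le_left _ _)⟩
  have hstep : ‖(t • (d + (ε / 2) • b)).1‖ ≤ t * (M + ε) :=
    calc ‖(t • (d + (ε / 2) • b)).1‖ ≤ t * (M + ε / 2) :=
          (norm_fst_le _).trans (norm_smul_add_smul_le_s6 ht0 (by positivity) (hdM d hd) hb)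
      _ ≤ t * (M + ε) := by gcongr; linarith
  have htρ : t * (M + ε) ≤ ρ / 3 := by
    have := (le_div_iff₀ (by positivity)).1 (htlam.trans (min_le_right _ _))
    linarith
  obtain ⟨b', hb', heq⟩ := exists_shear_add_smul_eq ψ e d b ht hε hb <| by
    refine (hψη _ he_ball _ ?_).trans ?_
    · rw [mem_ball, dist_eq_norm, Prod.fst_add, add_sub_right_comm]
      refine (norm_add_le _ _).trans_lt ?_
      linarith [min_le_right (δ / 2) (ρ / 2)]
    · rw [Prod.fst_add, add_sub_cancel_left]
      calc η * ‖(t • (d + (ε / 2) • b)).1‖ ≤ η * (t * (M + ε)) := by gcongr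
        _ = ε / 2 * t := by rw [mul_left_comm, hηM, mul_comm]
  exact ⟨b', hb', by rw [Set.mem_preimage, heq]; exact hmem⟩

lemma isUniformTangentSet_preimage_shear_iff {X : Type*} [NormedAddCommGroup X]
    [NormedSpace ℝ X] {E D : Set (X × ℝ)} {x₀ : X} {r : ℝ} {ψ : X → ℝ}
    (hψ : HasStrictFDerivAt ψ (0 : X →L[ℝ] ℝ) x₀) (hψ0 : ψ x₀ = 0) :
    IsUniformTangentSet (shear ψ ⁻¹' E) (x₀, r) D ↔ IsUniformTangentSet E (x₀, r) D := by
  refine ⟨fun h => ?_, fun h => h.preimage_shear hψ hψ0⟩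
  have := h.preimage_shear (ψ := -ψ) (by simpa using hψ.neg) (by simp [hψ0])
  rwa [← Set.preimage_comp, shear_comp_shear_neg, Set.preimage_id] at this

lemma setOf_add_coe_le_eq_preimage_shear {X : Type*} (φ : X → EReal) (ψ : X → ℝ) :
    {p : X × ℝ | φ p.1 + (ψ p.1 : EReal) ≤ (p.2 : EReal)} =
      shear (-ψ) ⁻¹' {p : X × ℝ | φ p.1 ≤ (p.2 : EReal)} := by
  ext p
  simp only [Set.mem_ofPred_eq, Set.mem_preimage, shear, Pi.neg_apply, ← sub_eq_add_neg,
    EReal.coe_sub]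
  exact (EReal.le_sub_iff_add_le (.inl (EReal.coe_ne_bot _)) (.inl (EReal.coe_ne_top _))).symm

theorem uts_epigraph_perturbation_iff_general
    {X : Type*} [NormedAddCommGroup X] [NormedSpace ℝ X]
    (φ : X → EReal)
    (x₀ : X) (r : ℝ)
    (ψ : X → ℝ) (hψ0 : ψ x₀ = 0)
    (hψstrict : ∀ ε > (0:ℝ), ∃ δ > (0:ℝ), ∀ x y : X, ‖x - x₀‖ < δ → ‖y - x₀‖ < δ →
      |ψ y - ψ x| ≤ ε * ‖y - x‖)
    (D : Set (X × ℝ)) :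
    IsUniformTangentSet {p : X × ℝ | φ p.1 ≤ (p.2 : EReal)} (x₀, r) D ↔
      IsUniformTangentSet {p : X × ℝ | φ p.1 + (ψ p.1 : EReal) ≤ (p.2 : EReal)} (x₀, r) D := by
  have hψ : HasStrictFDerivAt ψ (0 : X →L[ℝ] ℝ) x₀ :=
    hasStrictFDerivAt_zero_of_forall_abs_sub_le hψstrict
  rw [setOf_add_coe_le_eq_preimage_shear,
    isUniformTangentSet_preimage_shear_iff (by simpa using hψ.neg) (by simp [hψ0])]

/-- Adding a strictly differentiable function with zero value and zero derivative at `x₀`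
does not change uniform tangent sets to the epigraph at `(x₀, φ(x₀))`. -/
theorem uts_epigraph_perturbation_iff
    {X : Type*} [NormedAddCommGroup X] [NormedSpace ℝ X] [CompleteSpace X]
    (φ : X → EReal) (hφbot : ∀ x, φ x ≠ ⊥) (hlsc : LowerSemicontinuous φ)
    (x₀ : X) (r : ℝ) (hr : φ x₀ = (r : EReal))
    (ψ : X → ℝ) (hψc : Continuous ψ) (hψ0 : ψ x₀ = 0)
    (hψstrict : ∀ ε > (0:ℝ), ∃ δ > (0:ℝ), ∀ x y : X, ‖x - x₀‖ < δ → ‖y - x₀‖ < δ →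
      |ψ y - ψ x| ≤ ε * ‖y - x‖)
    (D : Set (X × ℝ)) :
    IsUniformTangentSet {p : X × ℝ | φ p.1 ≤ (p.2 : EReal)} (x₀, r) D ↔
      IsUniformTangentSet {p : X × ℝ | φ p.1 + (ψ p.1 : EReal) ≤ (p.2 : EReal)} (x₀, r) D :=
  uts_epigraph_perturbation_iff_general φ x₀ r ψ hψ0 hψstrict D
end
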